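/- Suppose θ < 0. Then G' has a negative cycle if and only if there exists a simple path π from y₀ to x₀ in G such that length_G(π) + ω'(e₀) < 0. -/

import Mathlib

namespace DynSPT

variable {V : Type*}

/-- The list of consecutive edges of a path given as a list of vertices. -/
def edgeList (l : List V) : List (V × V) := l.zip l.tail

/-- The length of a path with respect to the weight function `ω`. -/
def len (ω : V → V → ℝ) (l : List V) : ℝ :=
  ((edgeList l).map fun p => ω p.1 p.2).sum

/-- `l` is a path in the directed graph with edge relation `E`. -/
def IsWalk (E : V → V → Prop) (l : List V) : Prop := l ≠ [] ∧ l.Chain' E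

/-- `l` is a path from `u` to `v` in the directed graph with edge relation `E`. -/
def IsWalkFrom (E : V → V → Prop) (l : List V) (u v : V) : Prop :=
  IsWalk E l ∧ l.head? = some u ∧ l.getLast? = some v

/-- The path `l` traverses the edge `e`. -/
def Traverses (l : List V) (e : V × V) : Prop := e ∈ edgeList l

/-- `l` is a cycle: a path with at least one edge whose first and last vertices agree. -/
def IsCycle (E : V → V → Prop) (l : List V) : Prop :=
  ∃ v, IsWalkFrom E l v v ∧ 2 ≤ l.length

/-- The weighted directed graph `(E, ω)` has a negative cycle. -/
def HasNegCycle (E : V → V → Prop) (ω : V → V → ℝ) : Prop :=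
  ∃ l, IsCycle E l ∧ len ω l < 0

/-- The weighted directed graph `(E, ω)` has a zero-length cycle. -/
def HasZeroCycle (E : V → V → Prop) (ω : V → V → ℝ) : Prop :=
  ∃ l, IsCycle E l ∧ len ω l = 0

/-- The distance from `s` to `v`: the infimum of the lengths of paths from `s` to `v`. -/
noncomputable def dist (E : V → V → Prop) (ω : V → V → ℝ) (s v : V) : ℝ :=
  sInf {L : ℝ | ∃ l, IsWalkFrom E l s v ∧ len ω l = L}

/-- A spanning tree of the directed graph `E` rooted at `s`, recorded by the parent
function together with, for every vertex `v`, the tree path from `s` to `v`. -/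
structure RootedTree (E : V → V → Prop) (s : V) where
  parent : V → V
  path : V → List V
  path_root : path s = [s]
  parent_edge : ∀ v, v ≠ s → E (parent v) v
  path_eq : ∀ v, v ≠ s → path v = path (parent v) ++ [v]
  path_isWalkFrom : ∀ v, IsWalkFrom E (path v) s v

/-- `(a, b)` is an edge of the rooted tree `T`. -/
def RootedTree.IsEdge {E : V → V → Prop} {s : V} (T : RootedTree E s) (a b : V) : Prop :=
  b ≠ s ∧ T.parent b = a

/-- `T` is a shortest-path tree for the weight function `ω`:
every tree path from the root is a shortest path. -/
def IsSPT {E : V → V → Prop} {s : V} (ω : V → V → ℝ) (T : RootedTree E s) : Prop :=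
  ∀ v, len ω (T.path v) = dist E ω s v

/-! If `G'` has a negative cycle, that cycle must use `e₀`, since otherwise it is a cycle of `G`.
Cutting a closed walk at its traversals of `e₀` writes its `ω'`-length as a sum of terms
`len_ω π + ω'(e₀)` over walks `π` from `y₀` to `x₀` that avoid `e₀`, so one of these terms is
negative; removing the cycles of such a `π`, which are nonnegative in `G`, makes it simple.
Conversely, a simple path from `y₀` to `x₀` cannot use `e₀`, because `x₀` occurs in it only as
its last vertex; closing it with `e₀` gives a cycle of `G'` of length `len_ω π + ω'(e₀)`. -/

@[simp]
lemma edgeList_cons_cons (a b : V) (l : List V) :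
    edgeList (a :: b :: l) = (a, b) :: edgeList (b :: l) := rfl

@[simp]
lemma len_singleton (ω : V → V → ℝ) (a : V) : len ω [a] = 0 := rfl

@[simp]
lemma len_cons_cons (ω : V → V → ℝ) (a b : V) (l : List V) :
    len ω (a :: b :: l) = ω a b + len ω (b :: l) := by
  simp [len]

lemma edgeList_append_cons (A : List V) (a : V) (B : List V) :
    edgeList (A ++ a :: B) = edgeList (A ++ [a]) ++ edgeList (a :: B) := by
  induction A with
  | nil => rfl
  | cons x A ih =>
    cases A with
    | nil => rfl
    | cons y A => simp only [List.cons_append, edgeList_cons_cons] at ih ⊢; rw [ih]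

lemma len_append_cons (ω : V → V → ℝ) (A : List V) (a : V) (B : List V) :
    len ω (A ++ a :: B) = len ω (A ++ [a]) + len ω (a :: B) := by
  rw [len, edgeList_append_cons, List.map_append, List.sum_append, len, len]

lemma len_append_of_getLast? (ω : V → V → ℝ) {A : List V} {a : V} (h : A.getLast? = some a)
    (t : List V) : len ω (A ++ t) = len ω A + len ω (a :: t) := by
  obtain ⟨A, rfl⟩ : ∃ A', A = A' ++ [a] := ⟨A.dropLast, (List.dropLast_append_getLast? a h).symm⟩
  rw [List.append_assoc, List.singleton_append, len_append_cons]

lemma len_eq_of_not_traverses {ω ω' : V → V → ℝ} {x₀ y₀ : V}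
    (hω' : ∀ a b, (a, b) ≠ (x₀, y₀) → ω' a b = ω a b) {l : List V}
    (hl : ¬ Traverses l (x₀, y₀)) : len ω' l = len ω l := by
  refine congrArg List.sum (List.map_congr_left fun e he => hω' e.1 e.2 fun h => hl ?_)
  rwa [Traverses, ← h]

lemma Traverses.exists_eq_append {a b : V} {l : List V} (h : Traverses l (a, b)) :
    ∃ A B, l = A ++ a :: b :: B := by
  induction l with
  | nil => cases h
  | cons x t ih =>
    cases t with
    | nil => cases h
    | cons y t =>
      rcases List.mem_cons.mp h with h | h
      · obtain ⟨rfl, rfl⟩ := Prod.ext_iff.mp h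
        exact ⟨[], t, rfl⟩
      · obtain ⟨A, B, hAB⟩ := ih h
        exact ⟨x :: A, B, by rw [hAB, List.cons_append]⟩

lemma not_traverses_of_nodup {l : List V} {x : V} (hl : l.Nodup) (hx : l.getLast? = some x)
    (b : V) : ¬ Traverses l (x, b) := by
  intro h
  obtain ⟨A, B, rfl⟩ := h.exists_eq_append
  have hxB : x ∈ b :: B := by
    rw [List.getLast?_append_cons, List.getLast?_cons_cons] at hx
    exact List.mem_of_getLast? hx
  exact (List.nodup_cons.mp (List.nodup_append.mp hl).2.1).1 hxB

lemma exists_eq_append_of_not_nodup {l : List V} (hl : ¬ l.Nodup) :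
    ∃ A w B C, l = A ++ w :: (B ++ w :: C) := by
  induction l with
  | nil => exact absurd List.nodup_nil hl
  | cons x t ih =>
    by_cases hx : x ∈ t
    · obtain ⟨B, C, rfl⟩ := List.append_of_mem hx
      exact ⟨[], x, B, C, rfl⟩
    · obtain ⟨A, w, B, C, rfl⟩ := ih fun ht => hl (List.nodup_cons.mpr ⟨hx, ht⟩)
      exact ⟨x :: A, w, B, C, rfl⟩

section Walks

variable {E : V → V → Prop}

lemma IsWalkFrom.split {A B : List V} {a u v : V} (h : IsWalkFrom E (A ++ a :: B) u v) :
    IsWalkFrom E (A ++ [a]) u a ∧ IsWalkFrom E (a :: B) a v := by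
  obtain ⟨⟨-, hch⟩, hh, hl⟩ := h
  rw [← List.singleton_append, ← List.append_assoc] at hch
  obtain ⟨hchA, hchB, hlink⟩ := List.isChain_append.mp hch
  have hlastA : (A ++ [a]).getLast? = some a := by simp
  refine ⟨⟨⟨by simp, hchA⟩, ?_, hlastA⟩, ⟨⟨by simp, ?_⟩, rfl, ?_⟩⟩
  · rw [← hh]; cases A <;> rfl
  · exact List.isChain_cons.mpr ⟨fun y hy => hlink a hlastA y hy, hchB⟩
  · rw [← hl]
    cases B with
    | nil => simp
    | cons b B => rw [List.getLast?_append_cons, List.getLast?_cons_cons]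

lemma IsWalkFrom.append {P t : List V} {u w v : V} (h₁ : IsWalkFrom E P u w)
    (h₂ : IsWalkFrom E (w :: t) w v) : IsWalkFrom E (P ++ t) u v := by
  obtain ⟨⟨hne, hch₁⟩, hh, hl⟩ := h₁
  obtain ⟨⟨-, hch₂⟩, -, hl₂⟩ := h₂
  obtain ⟨hw, hch₂⟩ := List.isChain_cons.mp hch₂
  refine ⟨⟨by simp [hne], List.isChain_append.mpr ⟨hch₁, hch₂, ?_⟩⟩, ?_, ?_⟩
  · rw [hl]
    intro x hx y hy
    obtain rfl : w = x := Option.some_inj.mp hx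
    exact hw y hy
  · rwa [List.head?_append_of_ne_nil _ hne]
  · cases t with
    | nil => simpa [hl] using hl₂
    | cons b t =>
      rw [List.getLast?_append_of_ne_nil _ (List.cons_ne_nil _ _), ← hl₂, List.getLast?_cons_cons]

end Walks

section NegativeCycles

variable {E : V → V → Prop} {ω ω' : V → V → ℝ} {x₀ y₀ : V}

lemma len_nonneg_of_isCycle (hG : ¬ HasNegCycle E ω) {l : List V} (hl : IsCycle E l) :
    0 ≤ len ω l :=
  not_lt.mp fun h => hG ⟨l, hl, h⟩

lemma exists_nodup_isWalkFrom_len_le (hG : ¬ HasNegCycle E ω) {l : List V} {u v : V}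
    (hl : IsWalkFrom E l u v) : ∃ l', IsWalkFrom E l' u v ∧ l'.Nodup ∧ len ω l' ≤ len ω l := by
  induction hn : l.length using Nat.strong_induction_on generalizing l with
  | _ n ih =>
  by_cases hnd : l.Nodup
  · exact ⟨l, hl, hnd, le_rfl⟩
  obtain ⟨A, w, B, C, rfl⟩ := exists_eq_append_of_not_nodup hnd
  obtain ⟨hA, hBC⟩ := hl.split
  rw [← List.cons_append] at hBC
  obtain ⟨hcyc, hC⟩ := hBC.split
  obtain ⟨l', hl', hnd', hle⟩ := ih _ (by simp [← hn]) (hA.append hC) rfl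
  have hcyc_nonneg := len_nonneg_of_isCycle hG ⟨w, hcyc, by simp⟩
  refine ⟨l', hl', hnd', hle.trans ?_⟩
  have e₁ := len_append_cons ω A w (B ++ w :: C)
  have e₂ := len_append_cons ω (w :: B) w C
  have e₃ := len_append_cons ω A w C
  rw [List.cons_append] at e₂
  rw [List.append_assoc, List.singleton_append]
  linarith

lemma len_add_nonneg_of_forall_nodup (hω' : ∀ a b, (a, b) ≠ (x₀, y₀) → ω' a b = ω a b)
    (hG : ¬ HasNegCycle E ω) (h : ∀ π, IsWalkFrom E π y₀ x₀ → π.Nodup → 0 ≤ len ω π + ω' x₀ y₀)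
    {π : List V} (hπ : IsWalkFrom E π y₀ x₀) : 0 ≤ len ω' π + ω' x₀ y₀ := by
  induction hn : π.length using Nat.strong_induction_on generalizing π with
  | _ n ih =>
  by_cases htr : Traverses π (x₀, y₀)
  · obtain ⟨A, B, rfl⟩ := htr.exists_eq_append
    obtain ⟨hA, hB⟩ := hπ.split
    obtain ⟨-, hB⟩ := (show IsWalkFrom E ([x₀] ++ y₀ :: B) x₀ x₀ from hB).split
    have hA_nonneg := ih _ (by simp [← hn]) hA rfl
    have hB_nonneg := ih _ (by simp [← hn]; omega) hB rfl
    rw [len_append_cons, len_cons_cons]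
    linarith
  · obtain ⟨ρ, hρ, hρnd, hle⟩ := exists_nodup_isWalkFrom_len_le hG hπ
    rw [len_eq_of_not_traverses hω' htr]
    linarith [h ρ hρ hρnd]

lemma not_hasNegCycle_of_forall_nodup (hω' : ∀ a b, (a, b) ≠ (x₀, y₀) → ω' a b = ω a b)
    (hG : ¬ HasNegCycle E ω)
    (h : ∀ π, IsWalkFrom E π y₀ x₀ → π.Nodup → 0 ≤ len ω π + ω' x₀ y₀) :
    ¬ HasNegCycle E ω' := by
  rintro ⟨c, ⟨w, hc, hc_len⟩, hc_neg⟩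
  by_cases htr : Traverses c (x₀, y₀)
  · obtain ⟨A, B, rfl⟩ := htr.exists_eq_append
    obtain ⟨hA, hB⟩ := hc.split
    obtain ⟨-, hB⟩ := (show IsWalkFrom E ([x₀] ++ y₀ :: B) x₀ w from hB).split
    obtain ⟨t, ht⟩ := List.head?_eq_some_iff.mp hA.2.1
    rw [ht] at hA
    -- rotate the cycle so that it starts right after `e₀`
    have hrot := len_add_nonneg_of_forall_nodup hω' hG h (hB.append hA)
    rw [len_append_of_getLast? ω' hB.2.2] at hrot
    rw [len_append_cons, ht, len_cons_cons] at hc_neg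
    linarith
  · exact hG ⟨c, ⟨w, hc, hc_len⟩, by rwa [← len_eq_of_not_traverses hω' htr]⟩

lemma hasNegCycle_of_nodup (hω' : ∀ a b, (a, b) ≠ (x₀, y₀) → ω' a b = ω a b) (hE₀ : E x₀ y₀)
    {π : List V} (hπ : IsWalkFrom E π y₀ x₀) (hnd : π.Nodup)
    (hneg : len ω π + ω' x₀ y₀ < 0) : HasNegCycle E ω' := by
  have hcyc : IsWalkFrom E (π ++ [y₀]) y₀ y₀ :=
    hπ.append ⟨⟨List.cons_ne_nil _ _, List.isChain_pair.mpr hE₀⟩, rfl, rfl⟩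
  refine ⟨π ++ [y₀], ⟨y₀, hcyc, ?_⟩, ?_⟩
  · simpa [Nat.one_le_iff_ne_zero] using hπ.1.1
  · rw [len_append_of_getLast? ω' hπ.2.2,
      len_eq_of_not_traverses hω' (not_traverses_of_nodup hnd hπ.2.2 y₀)]
    simpa using hneg

end NegativeCycles

theorem statement_12_general
    {V : Type*} (E : V → V → Prop) (ω ω' : V → V → ℝ) (x₀ y₀ : V)
    (hE₀ : E x₀ y₀)
    (hω' : ∀ a b, (a, b) ≠ (x₀, y₀) → ω' a b = ω a b)
    (hG : ¬ HasNegCycle E ω) :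
    HasNegCycle E ω' ↔
      ∃ l, IsWalkFrom E l y₀ x₀ ∧ l.Nodup ∧ len ω l + ω' x₀ y₀ < 0 := by
  refine ⟨fun hneg => ?_, fun ⟨π, hπ, hnd, hlt⟩ => hasNegCycle_of_nodup hω' hE₀ hπ hnd hlt⟩
  by_contra! hno
  exact not_hasNegCycle_of_forall_nodup hω' hG hno hneg

theorem statement_12
    {V : Type*} [Fintype V] (E : V → V → Prop) (ω ω' : V → V → ℝ) (s x₀ y₀ : V)
    (hE₀ : E x₀ y₀)
    (hreach : ∀ v, ∃ l, IsWalkFrom E l s v)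
    (hω' : ∀ a b, (a, b) ≠ (x₀, y₀) → ω' a b = ω a b)
    (hG : ¬ HasNegCycle E ω)
    (hθ : ω' x₀ y₀ - ω x₀ y₀ < 0) :
    HasNegCycle E ω' ↔
      ∃ l, IsWalkFrom E l y₀ x₀ ∧ l.Nodup ∧ len ω l + ω' x₀ y₀ < 0 :=
  statement_12_general E ω ω' x₀ y₀ hE₀ hω' hG

end DynSPT
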